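/- Every formula derivable in the proof system K4^{∇•} is true at every world of every transitive Kripke model. In particular, for all formulas φ, ψ, ψ_1, ψ_2 of L(∇,•), the four schemas A4-1: Δφ → ΔΔφ; A4-2: Δφ → ∘(ψ → Δφ); A4-3: (•ψ_1 ∧ Δφ ∧ ∘(¬ψ_1→φ)) → Δ∘(¬ψ_2→φ); and A4-4: (•ψ_1 ∧ Δφ ∧ ∘(¬ψ_1→φ)) → ∘(¬ψ_1 → ∘(¬ψ_2→φ)) are valid on the class of transitive Kripke models. -/

import Mathlib

inductive Form : Type
  | atom : Nat → Form
  | neg : Form → Form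
  | and : Form → Form → Form
  | nabla : Form → Form
  | bull : Form → Form

namespace Form
def imp (φ ψ : Form) : Form := neg (and φ (neg ψ))
def orf (φ ψ : Form) : Form := neg (and (neg φ) (neg ψ))
def ifff (φ ψ : Form) : Form := and (imp φ ψ) (imp ψ φ)
def delta (φ : Form) : Form := neg (nabla φ)
def circ (φ : Form) : Form := neg (bull φ)
end Form

structure Model (W : Type) where
  R : W → W → Prop
  V : Nat → W → Prop

def sat {W : Type} (M : Model W) : W → Form → Prop
  | s, .atom n => M.V n s
  | s, .neg φ => ¬ sat M s φ
  | s, .and φ ψ => sat M s φ ∧ sat M s ψ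
  | s, .nabla φ => ∃ t u, M.R s t ∧ M.R s u ∧ sat M t φ ∧ ¬ sat M u φ
  | s, .bull φ => sat M s φ ∧ ∃ t, M.R s t ∧ ¬ sat M t φ

/-- Boolean evaluation treating atoms, `∇φ` and `•φ` as propositional atoms;
used to express "instance of a propositional tautology". -/
def evalT (v : Form → Bool) : Form → Bool
  | .neg φ => !(evalT v φ)
  | .and φ ψ => evalT v φ && evalT v ψ
  | φ => v φ

/-- `φ` is an instance of a propositional tautology. -/
def Taut (φ : Form) : Prop := ∀ v : Form → Bool, evalT v φ = true

/-- Derivability in the minimal system `K^{∇•}`. -/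
inductive Prov : Form → Prop
  | a0 : ∀ φ, Taut φ → Prov φ
  | a1 : ∀ φ, Prov (Form.imp (.bull φ) φ)
  | a2 : ∀ φ, Prov (Form.ifff (.nabla φ) (.nabla (.neg φ)))
  | a3 : ∀ φ ψ, Prov (Form.imp (.and (.bull (Form.imp ψ φ)) φ) (.bull φ))
  | a4 : ∀ φ ψ, Prov (Form.imp (.nabla (.and φ ψ)) (Form.orf (.nabla φ) (.nabla ψ)))
  | a5 : ∀ φ ψ, Prov (Form.imp (.bull (.and φ ψ)) (Form.orf (.bull φ) (.bull ψ)))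
  | a6 : ∀ φ, Prov (Form.imp (.nabla φ) (Form.orf (.bull φ) (.bull (.neg φ))))
  | a7 : ∀ φ ψ χ, Prov (Form.imp (.and (.bull (Form.imp φ ψ)) (.bull (Form.imp (.neg φ) χ))) (.nabla φ))
  | r1 : ∀ φ, Prov φ → Prov (Form.delta φ)
  | r2 : ∀ φ, Prov φ → Prov (Form.circ φ)
  | r3 : ∀ φ ψ, Prov (Form.ifff φ ψ) → Prov (Form.ifff (Form.delta φ) (Form.delta ψ))
  | r4 : ∀ φ ψ, Prov (Form.ifff φ ψ) → Prov (Form.ifff (Form.circ φ) (Form.circ ψ))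
  | mp : ∀ φ ψ, Prov (Form.imp φ ψ) → Prov φ → Prov ψ

/-- Axiom A4-1: `Δφ → ΔΔφ`. -/
def ax41 (φ : Form) : Form := Form.imp (Form.delta φ) (Form.delta (Form.delta φ))

/-- Axiom A4-2: `Δφ → ∘(ψ → Δφ)`. -/
def ax42 (φ ψ : Form) : Form :=
  Form.imp (Form.delta φ) (Form.circ (Form.imp ψ (Form.delta φ)))

/-- Axiom A4-3: `(•ψ₁ ∧ Δφ ∧ ∘(¬ψ₁→φ)) → Δ∘(¬ψ₂→φ)`. -/
def ax43 (φ ψ₁ ψ₂ : Form) : Form :=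
  Form.imp
    (.and (.bull ψ₁) (.and (Form.delta φ) (Form.circ (Form.imp (.neg ψ₁) φ))))
    (Form.delta (Form.circ (Form.imp (.neg ψ₂) φ)))

/-- Axiom A4-4: `(•ψ₁ ∧ Δφ ∧ ∘(¬ψ₁→φ)) → ∘(¬ψ₁ → ∘(¬ψ₂→φ))`. -/
def ax44 (φ ψ₁ ψ₂ : Form) : Form :=
  Form.imp
    (.and (.bull ψ₁) (.and (Form.delta φ) (Form.circ (Form.imp (.neg ψ₁) φ))))
    (Form.circ (Form.imp (.neg ψ₁) (Form.circ (Form.imp (.neg ψ₂) φ))))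

/-- Derivability in the system `K4^{∇•}` = `K^{∇•}` + A4-1 + A4-2 + A4-3 + A4-4. -/
inductive Prov4 : Form → Prop
  | a0 : ∀ φ, Taut φ → Prov4 φ
  | a1 : ∀ φ, Prov4 (Form.imp (.bull φ) φ)
  | a2 : ∀ φ, Prov4 (Form.ifff (.nabla φ) (.nabla (.neg φ)))
  | a3 : ∀ φ ψ, Prov4 (Form.imp (.and (.bull (Form.imp ψ φ)) φ) (.bull φ))
  | a4 : ∀ φ ψ, Prov4 (Form.imp (.nabla (.and φ ψ)) (Form.orf (.nabla φ) (.nabla ψ)))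
  | a5 : ∀ φ ψ, Prov4 (Form.imp (.bull (.and φ ψ)) (Form.orf (.bull φ) (.bull ψ)))
  | a6 : ∀ φ, Prov4 (Form.imp (.nabla φ) (Form.orf (.bull φ) (.bull (.neg φ))))
  | a7 : ∀ φ ψ χ, Prov4 (Form.imp (.and (.bull (Form.imp φ ψ)) (.bull (Form.imp (.neg φ) χ))) (.nabla φ))
  | a41 : ∀ φ, Prov4 (ax41 φ)
  | a42 : ∀ φ ψ, Prov4 (ax42 φ ψ)
  | a43 : ∀ φ ψ₁ ψ₂, Prov4 (ax43 φ ψ₁ ψ₂)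
  | a44 : ∀ φ ψ₁ ψ₂, Prov4 (ax44 φ ψ₁ ψ₂)
  | r1 : ∀ φ, Prov4 φ → Prov4 (Form.delta φ)
  | r2 : ∀ φ, Prov4 φ → Prov4 (Form.circ φ)
  | r3 : ∀ φ ψ, Prov4 (Form.ifff φ ψ) → Prov4 (Form.ifff (Form.delta φ) (Form.delta ψ))
  | r4 : ∀ φ ψ, Prov4 (Form.ifff φ ψ) → Prov4 (Form.ifff (Form.circ φ) (Form.circ ψ))
  | mp : ∀ φ ψ, Prov4 (Form.imp φ ψ) → Prov4 φ → Prov4 ψ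

/-!
Soundness is proved by induction on derivations. The axioms and rules of `K^{∇•}` hold in every
model. Transitivity is needed only for A4-1 to A4-4: a pair of successors witnessing `∇φ` at a
successor `t` of `s` also witnesses `∇φ` at `s`, and the premise of A4-3 and A4-4 forces `φ` at
every successor of `s`, hence, by transitivity, at every successor of a successor.
-/

namespace Form

variable {W : Type} (M : Model W) (s : W) (φ ψ : Form)

@[simp] lemma sat_imp : sat M s (imp φ ψ) ↔ (sat M s φ → sat M s ψ) := by
  simp only [imp, sat]; tauto

@[simp] lemma sat_orf : sat M s (orf φ ψ) ↔ (sat M s φ ∨ sat M s ψ) := by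
  simp only [orf, sat]; tauto

@[simp] lemma sat_ifff : sat M s (ifff φ ψ) ↔ (sat M s φ ↔ sat M s ψ) := by
  simp only [ifff, sat, sat_imp]; tauto

@[simp] lemma sat_delta : sat M s (delta φ) ↔ ¬ sat M s (nabla φ) := Iff.rfl

@[simp] lemma sat_circ : sat M s (circ φ) ↔ ¬ sat M s (bull φ) := Iff.rfl

end Form

open Form

section Tautologies

open scoped Classical

variable {W : Type} (M : Model W) (s : W)

lemma evalT_decide_sat_eq_true_iff (φ : Form) :
    evalT (fun ψ => decide (sat M s ψ)) φ = true ↔ sat M s φ := by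
  induction φ with
  | neg φ ih => simp [evalT, sat, ← ih]
  | and φ ψ ihφ ihψ => simp [evalT, sat, ← ihφ, ← ihψ]
  | atom | nabla | bull => exact decide_eq_true_iff

lemma sat_of_taut {φ : Form} (h : Taut φ) : sat M s φ :=
  (evalT_decide_sat_eq_true_iff M s φ).1 (h _)

end Tautologies

section MinimalLogic

variable {W : Type} {M : Model W} {s : W} (φ ψ χ : Form)

lemma sat_bull_imp_self : sat M s (imp (bull φ) φ) := by
  simp only [sat_imp, sat]; exact And.left

lemma sat_nabla_iff_nabla_neg : sat M s (ifff (nabla φ) (nabla (neg φ))) := by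
  simp only [sat_ifff, sat, not_not]
  constructor <;> rintro ⟨t, u, hst, hsu, ht, hu⟩ <;> exact ⟨u, t, hsu, hst, hu, ht⟩

lemma sat_bull_of_bull_imp : sat M s (imp (and (bull (imp ψ φ)) φ) (bull φ)) := by
  simp only [sat_imp, sat]
  rintro ⟨⟨-, t, hst, ht⟩, hφ⟩
  exact ⟨hφ, t, hst, fun h => ht fun _ => h⟩

lemma sat_nabla_and_imp : sat M s (imp (nabla (and φ ψ)) (orf (nabla φ) (nabla ψ))) := by
  simp only [sat_imp, sat_orf, sat, not_and]
  rintro ⟨t, u, hst, hsu, ⟨htφ, htψ⟩, hu⟩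
  by_cases huφ : sat M u φ
  · exact Or.inr ⟨t, u, hst, hsu, htψ, hu huφ⟩
  · exact Or.inl ⟨t, u, hst, hsu, htφ, huφ⟩

lemma sat_bull_and_imp : sat M s (imp (bull (and φ ψ)) (orf (bull φ) (bull ψ))) := by
  simp only [sat_imp, sat_orf, sat, not_and]
  rintro ⟨⟨hsφ, hsψ⟩, t, hst, ht⟩
  by_cases htφ : sat M t φ
  · exact Or.inr ⟨hsψ, t, hst, ht htφ⟩
  · exact Or.inl ⟨hsφ, t, hst, htφ⟩

lemma sat_nabla_imp_bull_or_bull_neg :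
    sat M s (imp (nabla φ) (orf (bull φ) (bull (neg φ)))) := by
  simp only [sat_imp, sat_orf, sat, not_not]
  rintro ⟨t, u, hst, hsu, ht, hu⟩
  by_cases hs : sat M s φ
  · exact Or.inl ⟨hs, u, hsu, hu⟩
  · exact Or.inr ⟨hs, t, hst, ht⟩

lemma sat_bull_bull_imp_nabla :
    sat M s (imp (and (bull (imp φ ψ)) (bull (imp (neg φ) χ))) (nabla φ)) := by
  simp only [sat_imp, sat]
  rintro ⟨⟨-, t, hst, ht⟩, ⟨-, u, hsu, hu⟩⟩
  exact ⟨t, u, hst, hsu, by_contra fun h => ht h.elim, fun h => hu (absurd h)⟩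

variable {φ ψ}

lemma not_sat_nabla_of_valid (h : ∀ w, sat M w φ) : ¬ sat M s (nabla φ) :=
  fun ⟨_, u, _, _, _, hu⟩ => hu (h u)

lemma not_sat_bull_of_valid (h : ∀ w, sat M w φ) : ¬ sat M s (bull φ) :=
  fun ⟨_, t, _, ht⟩ => ht (h t)

lemma sat_delta_congr (h : ∀ w, sat M w φ ↔ sat M w ψ) :
    sat M s (delta φ) ↔ sat M s (delta ψ) := by
  simp only [sat_delta, sat, h]

lemma sat_circ_congr (h : ∀ w, sat M w φ ↔ sat M w ψ) :
    sat M s (circ φ) ↔ sat M s (circ ψ) := by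
  simp only [sat_circ, sat, h]

/-- `•ψ₁` yields a successor refuting `ψ₁`, which satisfies `φ` by `∘(¬ψ₁ → φ)`;
then `Δφ` makes all successors agree on `φ`. -/
lemma sat_succ_of_bull_delta_circ {ψ₁ : Form}
    (h : sat M s (and (bull ψ₁) (and (delta φ) (circ (imp (neg ψ₁) φ))))) :
    ∀ t, M.R s t → sat M t φ := by
  simp only [sat, sat_delta, sat_circ, sat_imp, not_and, not_exists, not_not] at h
  obtain ⟨⟨hsψ₁, u, hsu, huψ₁⟩, hΔ, hcirc⟩ := h
  have huφ : sat M u φ := hcirc (fun h => (h hsψ₁).elim) u hsu huψ₁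
  exact fun t hst => by_contra fun htφ => htφ (hΔ u t hsu hst huφ)

end MinimalLogic

section TransitiveFrames

variable {W : Type} {M : Model W} [IsTrans W M.R] {s : W} (φ ψ ψ₁ ψ₂ : Form)

lemma sat_nabla_of_succ_nabla {t : W} (hst : M.R s t) (ht : sat M t (nabla φ)) :
    sat M s (nabla φ) :=
  let ⟨a, b, hta, htb, ha, hb⟩ := ht
  ⟨a, b, trans_of M.R hst hta, trans_of M.R hst htb, ha, hb⟩

lemma sat_ax41 : sat M s (ax41 φ) := by
  simp only [ax41, sat_imp, sat_delta, sat, not_not]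
  rintro hΔ ⟨-, u, -, hsu, -, hu⟩
  exact hΔ (sat_nabla_of_succ_nabla φ hsu hu)

lemma sat_ax42 : sat M s (ax42 φ ψ) := by
  simp only [ax42, sat_imp, sat_circ, sat_delta, sat]
  rintro hΔ ⟨-, t, hst, ht⟩
  exact ht fun _ h => hΔ (sat_nabla_of_succ_nabla φ hst h)

lemma sat_ax43 : sat M s (ax43 φ ψ₁ ψ₂) := by
  rw [ax43, sat_imp]
  intro h
  have hsucc := sat_succ_of_bull_delta_circ h
  simp only [sat_delta, sat_circ, sat, sat_imp, not_not]
  rintro ⟨-, u, -, hsu, -, -, v, huv, hv⟩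
  exact hv fun _ => hsucc v (trans_of M.R hsu huv)

lemma sat_ax44 : sat M s (ax44 φ ψ₁ ψ₂) := by
  rw [ax44, sat_imp]
  intro h
  have hsucc := sat_succ_of_bull_delta_circ h
  simp only [sat_circ, sat, sat_imp]
  rintro ⟨-, t, hst, ht⟩
  exact ht fun _ ⟨_, v, htv, hv⟩ => hv fun _ => hsucc v (trans_of M.R hst htv)

theorem Prov4.sat {φ : Form} (h : Prov4 φ) : ∀ s, sat M s φ := by
  induction h with
  | a0 φ hφ => exact fun s => sat_of_taut M s hφ
  | a1 φ => exact fun _ => sat_bull_imp_self φ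
  | a2 φ => exact fun _ => sat_nabla_iff_nabla_neg φ
  | a3 φ ψ => exact fun _ => sat_bull_of_bull_imp φ ψ
  | a4 φ ψ => exact fun _ => sat_nabla_and_imp φ ψ
  | a5 φ ψ => exact fun _ => sat_bull_and_imp φ ψ
  | a6 φ => exact fun _ => sat_nabla_imp_bull_or_bull_neg φ
  | a7 φ ψ χ => exact fun _ => sat_bull_bull_imp_nabla φ ψ χ
  | a41 φ => exact fun _ => sat_ax41 φ
  | a42 φ ψ => exact fun _ => sat_ax42 φ ψ
  | a43 φ ψ₁ ψ₂ => exact fun _ => sat_ax43 φ ψ₁ ψ₂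
  | a44 φ ψ₁ ψ₂ => exact fun _ => sat_ax44 φ ψ₁ ψ₂
  | r1 φ _ ih => exact fun _ => not_sat_nabla_of_valid ih
  | r2 φ _ ih => exact fun _ => not_sat_bull_of_valid ih
  | r3 φ ψ _ ih =>
    exact fun _ => (sat_ifff ..).2 (sat_delta_congr fun w => (sat_ifff ..).1 (ih w))
  | r4 φ ψ _ ih =>
    exact fun _ => (sat_ifff ..).2 (sat_circ_congr fun w => (sat_ifff ..).1 (ih w))
  | mp φ ψ _ _ ihimp ih => exact fun s => (sat_imp M s φ ψ).1 (ihimp s) (ih s)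

end TransitiveFrames

theorem stmt14 :
    (∀ φ : Form, Prov4 φ →
      ∀ (W : Type) [Nonempty W] (M : Model W),
        (∀ a b c : W, M.R a b → M.R b c → M.R a c) → ∀ s : W, sat M s φ) ∧
    (∀ (W : Type) [Nonempty W] (M : Model W),
      (∀ a b c : W, M.R a b → M.R b c → M.R a c) →
        ∀ (s : W) (φ ψ ψ₁ ψ₂ : Form),
          sat M s (ax41 φ) ∧ sat M s (ax42 φ ψ) ∧
          sat M s (ax43 φ ψ₁ ψ₂) ∧ sat M s (ax44 φ ψ₁ ψ₂)) :=
  ⟨fun _ h _ _ M htr =>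
    have : IsTrans _ M.R := ⟨htr⟩
    h.sat,
   fun _ _ M htr _ φ ψ ψ₁ ψ₂ =>
    have : IsTrans _ M.R := ⟨htr⟩
    ⟨sat_ax41 φ, sat_ax42 φ ψ, sat_ax43 φ ψ₁ ψ₂, sat_ax44 φ ψ₁ ψ₂⟩⟩
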